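/- Let y ∈ ℝ^{n+1} have its centered fractional parts sorted in descending order: {y_1} ≥ {y_2} ≥ … ≥ {y_{n+1}}. Then for every λ ∈ [0, 1) there exists m ∈ {0, 1, …, n+1} such that ⌊y + λ·1⌉ = ⌊y⌉ + Σ_{i=1}^{m} e_i, where e_i denotes the i-th standard basis vector of ℝ^{n+1}. -/

import Mathlib

/-! Adding `λ ∈ [0, 1)` raises `⌊y_i⌉` by one exactly when `{y_i} + λ ≥ 1/2`, and by nothing
otherwise. Since `{y_i}` decreases in `i`, the coordinates that round up form an initial
segment `{1, …, m}`. -/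

/-- The all-ones vector in `ℝ^{n+1}`. -/
def ones {n : ℕ} : EuclideanSpace ℝ (Fin (n+1)) := WithLp.toLp 2 (fun _ => 1)

/-- Componentwise nearest-integer rounding of a vector (viewed in `ℝ^{n+1}`). -/
noncomputable def roundVec {n : ℕ} (y : EuclideanSpace ℝ (Fin (n+1))) :
    EuclideanSpace ℝ (Fin (n+1)) :=
  WithLp.toLp 2 (fun i => (round (y i) : ℝ))

/-- The centered fractional part `{t} = t - ⌊t⌉ ∈ [-1/2, 1/2)`. -/
noncomputable def fract (t : ℝ) : ℝ := t - round t

/-- `∑_{i=1}^{m} e_i`: the sum of the first `m` standard basis vectors of `ℝ^{n+1}`. -/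
noncomputable def basisSum (n : ℕ) (m : ℕ) : EuclideanSpace ℝ (Fin (n+1)) :=
  ∑ i ∈ Finset.univ.filter (fun i : Fin (n+1) => (i : ℕ) < m),
    EuclideanSpace.single i (1 : ℝ)

lemma fract_mem_Ico (t : ℝ) : fract t ∈ Set.Ico (-(1 / 2)) (1 / 2) := by
  rw [← round_eq_zero_iff, fract, round_sub_intCast, sub_self]

lemma round_eq_ite_of_mem_Ico {x : ℝ} (hx : x ∈ Set.Ico (-(1 / 2)) (3 / 2)) :
    round x = if 1 / 2 ≤ x then 1 else 0 := by
  obtain ⟨hl, hr⟩ := hx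
  split_ifs with h
  · rw [← sub_eq_zero, ← round_sub_one, round_eq_zero_iff]
    constructor <;> linarith
  · rw [round_eq_zero_iff]
    exact ⟨hl, not_le.mp h⟩

lemma round_add_of_mem_Ico (t : ℝ) {s : ℝ} (hs : s ∈ Set.Ico 0 1) :
    round (t + s) = round t + if 1 / 2 ≤ fract t + s then 1 else 0 := by
  obtain ⟨hl, hr⟩ := fract_mem_Ico t
  have hsplit : t + s = (fract t + s) + round t := by unfold fract; ring
  rw [hsplit, round_add_intCast, add_comm, round_eq_ite_of_mem_Ico (x := fract t + s)]
  constructor <;> linarith [hs.1, hs.2]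

lemma Fin.exists_forall_iff_lt_of_antitone {k : ℕ} {p : Fin k → Prop} (hp : Antitone p) :
    ∃ m ≤ k, ∀ i : Fin k, p i ↔ (i : ℕ) < m := by
  have hlower : IsLowerSet {i | p i} := fun _ _ hba ha => hp hba ha
  rcases hlower.eq_univ_or_Iio with h | ⟨a, h⟩
  · refine ⟨k, le_rfl, fun i => ⟨fun _ => i.is_lt, fun _ => ?_⟩⟩
    exact (Set.ext_iff.mp h i).mpr trivial
  · refine ⟨a, a.is_le', fun i => ?_⟩
    rw [← Fin.lt_def]
    exact Set.ext_iff.mp h i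

lemma basisSum_apply (n m : ℕ) (i : Fin (n + 1)) :
    basisSum n m i = if (i : ℕ) < m then 1 else 0 := by
  simp [basisSum, WithLp.ofLp_sum, Finset.sum_apply]

/-- If the centered fractional parts of `y` are sorted in descending order,
then for every `λ ∈ [0,1)` there is an `m ∈ {0,…,n+1}` with
`⌊y + λ·1⌉ = ⌊y⌉ + ∑_{i=1}^{m} e_i`. -/
theorem round_add_lambda_eq (n : ℕ) (y : EuclideanSpace ℝ (Fin (n+1)))
    (hsort : ∀ i j : Fin (n+1), i ≤ j → fract (y j) ≤ fract (y i)) :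
    ∀ lam ∈ Set.Ico (0 : ℝ) 1, ∃ m ≤ n + 1,
      roundVec (y + lam • ones) = roundVec y + basisSum n m := by
  intro lam hlam
  have hcarry : Antitone fun i => 1 / 2 ≤ fract (y i) + lam :=
    fun i j hij h => (add_le_add_left (hsort i j hij) lam).trans' h
  obtain ⟨m, hm, hcarry_iff⟩ := Fin.exists_forall_iff_lt_of_antitone hcarry
  refine ⟨m, hm, ?_⟩
  ext i
  simp only [roundVec, ones, WithLp.ofLp_add, WithLp.ofLp_smul, Pi.add_apply, Pi.smul_apply,
    smul_eq_mul, mul_one, basisSum_apply, round_add_of_mem_Ico (y i) hlam, hcarry_iff]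
  split_ifs <;> simp
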